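/- The largest eigenvalue μ of the Laplacian matrix of the graph G strictly exceeds max over all pairs of adjacent vertices v ~ j of 2 + √(3·(m_v² + m_j²) − (d_v² + d_j²) − 4·(m_v + m_j) + 4). (This gives a counterexample to conjectured bound 55 of Brankov, Hansen and Stevanović.) -/

import Mathlib

/-- The edge list of the graph. -/
def edgeList : List (Fin 12 × Fin 12) :=
  [(0,3),(0,4),(0,8),(1,2),(1,3),(1,8),(1,10),(2,5),(2,7),(2,11),(3,7),(3,11),(4,6),(4,7),(5,8),(5,9),(6,9),(6,10),(7,10),(9,11),(10,11)]

/-- The graph under consideration. -/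
def G : SimpleGraph (Fin 12) where
  Adj v w := (v, w) ∈ edgeList ∨ (w, v) ∈ edgeList
  symm := ⟨fun _ _ h => h.symm⟩
  loopless := ⟨by intro v; fin_cases v <;> decide⟩

instance : DecidableRel G.Adj :=
  fun v w => inferInstanceAs (Decidable ((v, w) ∈ edgeList ∨ (w, v) ∈ edgeList))

/-- `d v` is the degree of the vertex `v`, as a real number. -/
noncomputable def d (v : Fin 12) : ℝ := G.degree v

/-- `m v` is the average of the degrees of the neighbours of `v`. -/
noncomputable def m (v : Fin 12) : ℝ :=
  (∑ u ∈ G.neighborFinset v, (G.degree u : ℝ)) / d v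



lemma hN0 : G.neighborFinset 0 = {3,4,8} := by decide
lemma hN1 : G.neighborFinset 1 = {2,3,8,10} := by decide
lemma hN2 : G.neighborFinset 2 = {1,5,7,11} := by decide
lemma hN3 : G.neighborFinset 3 = {0,1,7,11} := by decide
lemma hN4 : G.neighborFinset 4 = {0,6,7} := by decide
lemma hN5 : G.neighborFinset 5 = {2,8,9} := by decide
lemma hN6 : G.neighborFinset 6 = {4,9,10} := by decide
lemma hN7 : G.neighborFinset 7 = {2,3,4,10} := by decide
lemma hN8 : G.neighborFinset 8 = {0,1,5} := by decide
lemma hN9 : G.neighborFinset 9 = {5,6,11} := by decide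
lemma hN10 : G.neighborFinset 10 = {1,6,7,11} := by decide
lemma hN11 : G.neighborFinset 11 = {2,3,9,10} := by decide
lemma hd0 : G.degree 0 = 3 := by decide
lemma hd1 : G.degree 1 = 4 := by decide
lemma hd2 : G.degree 2 = 4 := by decide
lemma hd3 : G.degree 3 = 4 := by decide
lemma hd4 : G.degree 4 = 3 := by decide
lemma hd5 : G.degree 5 = 3 := by decide
lemma hd6 : G.degree 6 = 3 := by decide
lemma hd7 : G.degree 7 = 4 := by decide
lemma hd8 : G.degree 8 = 3 := by decide
lemma hd9 : G.degree 9 = 3 := by decide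
lemma hd10 : G.degree 10 = 4 := by decide
lemma hd11 : G.degree 11 = 4 := by decide

noncomputable def xvec : Fin 12 → ℝ := ![2,5,-5,-5,-2,2,2,5,-2,-2,-5,5]
lemma xv0 : xvec 0 = (2:ℝ) := rfl
lemma xv1 : xvec 1 = (5:ℝ) := rfl
lemma xv2 : xvec 2 = (-5:ℝ) := rfl
lemma xv3 : xvec 3 = (-5:ℝ) := rfl
lemma xv4 : xvec 4 = (-2:ℝ) := rfl
lemma xv5 : xvec 5 = (2:ℝ) := rfl
lemma xv6 : xvec 6 = (2:ℝ) := rfl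
lemma xv7 : xvec 7 = (5:ℝ) := rfl
lemma xv8 : xvec 8 = (-2:ℝ) := rfl
lemma xv9 : xvec 9 = (-2:ℝ) := rfl
lemma xv10 : xvec 10 = (-5:ℝ) := rfl
lemma xv11 : xvec 11 = (5:ℝ) := rfl

open Matrix in
lemma mulvec_eq : (G.lapMatrix ℝ) *ᵥ xvec = ![15,37,-37,-37,-15,15,15,37,-15,-15,-37,37] := by
  have e0 : ((G.lapMatrix ℝ) *ᵥ xvec) 0 = (15:ℝ) := by
    rw [G.lapMatrix_mulVec_apply, hd0, hN0, Finset.sum_insert (by decide), Finset.sum_insert (by decide), Finset.sum_singleton, xv0, xv3, xv4, xv8]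
    norm_num
  have e1 : ((G.lapMatrix ℝ) *ᵥ xvec) 1 = (37:ℝ) := by
    rw [G.lapMatrix_mulVec_apply, hd1, hN1, Finset.sum_insert (by decide), Finset.sum_insert (by decide), Finset.sum_insert (by decide), Finset.sum_singleton, xv1, xv2, xv3, xv8, xv10]
    norm_num
  have e2 : ((G.lapMatrix ℝ) *ᵥ xvec) 2 = (-37:ℝ) := by
    rw [G.lapMatrix_mulVec_apply, hd2, hN2, Finset.sum_insert (by decide), Finset.sum_insert (by decide), Finset.sum_insert (by decide), Finset.sum_singleton, xv2, xv1, xv5, xv7, xv11]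
    norm_num
  have e3 : ((G.lapMatrix ℝ) *ᵥ xvec) 3 = (-37:ℝ) := by
    rw [G.lapMatrix_mulVec_apply, hd3, hN3, Finset.sum_insert (by decide), Finset.sum_insert (by decide), Finset.sum_insert (by decide), Finset.sum_singleton, xv3, xv0, xv1, xv7, xv11]
    norm_num
  have e4 : ((G.lapMatrix ℝ) *ᵥ xvec) 4 = (-15:ℝ) := by
    rw [G.lapMatrix_mulVec_apply, hd4, hN4, Finset.sum_insert (by decide), Finset.sum_insert (by decide), Finset.sum_singleton, xv4, xv0, xv6, xv7]
    norm_num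
  have e5 : ((G.lapMatrix ℝ) *ᵥ xvec) 5 = (15:ℝ) := by
    rw [G.lapMatrix_mulVec_apply, hd5, hN5, Finset.sum_insert (by decide), Finset.sum_insert (by decide), Finset.sum_singleton, xv5, xv2, xv8, xv9]
    norm_num
  have e6 : ((G.lapMatrix ℝ) *ᵥ xvec) 6 = (15:ℝ) := by
    rw [G.lapMatrix_mulVec_apply, hd6, hN6, Finset.sum_insert (by decide), Finset.sum_insert (by decide), Finset.sum_singleton, xv6, xv4, xv9, xv10]
    norm_num
  have e7 : ((G.lapMatrix ℝ) *ᵥ xvec) 7 = (37:ℝ) := by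
    rw [G.lapMatrix_mulVec_apply, hd7, hN7, Finset.sum_insert (by decide), Finset.sum_insert (by decide), Finset.sum_insert (by decide), Finset.sum_singleton, xv7, xv2, xv3, xv4, xv10]
    norm_num
  have e8 : ((G.lapMatrix ℝ) *ᵥ xvec) 8 = (-15:ℝ) := by
    rw [G.lapMatrix_mulVec_apply, hd8, hN8, Finset.sum_insert (by decide), Finset.sum_insert (by decide), Finset.sum_singleton, xv8, xv0, xv1, xv5]
    norm_num
  have e9 : ((G.lapMatrix ℝ) *ᵥ xvec) 9 = (-15:ℝ) := by
    rw [G.lapMatrix_mulVec_apply, hd9, hN9, Finset.sum_insert (by decide), Finset.sum_insert (by decide), Finset.sum_singleton, xv9, xv5, xv6, xv11]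
    norm_num
  have e10 : ((G.lapMatrix ℝ) *ᵥ xvec) 10 = (-37:ℝ) := by
    rw [G.lapMatrix_mulVec_apply, hd10, hN10, Finset.sum_insert (by decide), Finset.sum_insert (by decide), Finset.sum_insert (by decide), Finset.sum_singleton, xv10, xv1, xv6, xv7, xv11]
    norm_num
  have e11 : ((G.lapMatrix ℝ) *ᵥ xvec) 11 = (37:ℝ) := by
    rw [G.lapMatrix_mulVec_apply, hd11, hN11, Finset.sum_insert (by decide), Finset.sum_insert (by decide), Finset.sum_insert (by decide), Finset.sum_singleton, xv11, xv2, xv3, xv9, xv10]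
    norm_num
  funext v
  fin_cases v
  · exact e0
  · exact e1
  · exact e2
  · exact e3
  · exact e4
  · exact e5
  · exact e6
  · exact e7
  · exact e8
  · exact e9
  · exact e10
  · exact e11

open Matrix Pointwise in
lemma mu_lb (μ : ℝ) (hmax : ∀ ν ∈ spectrum ℝ (G.lapMatrix ℝ), ν ≤ μ) : (215:ℝ)/29 ≤ μ := by
  set L : Matrix (Fin 12) (Fin 12) ℝ := G.lapMatrix ℝ with hLdef
  set M : Matrix (Fin 12) (Fin 12) ℝ := (algebraMap ℝ _ μ) - L with hMdef
  have hML : L.IsHermitian := (SimpleGraph.posSemidef_lapMatrix ℝ G).1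
  have hM : M.IsHermitian := by
    rw [hMdef, Matrix.IsHermitian, Matrix.conjTranspose_sub, hML]
    congr 1
    simp [Algebra.algebraMap_eq_smul_one, Matrix.conjTranspose_smul]
  have hspec : spectrum ℝ M = ({μ} : Set ℝ) - spectrum ℝ L := by
    rw [hMdef, ← spectrum.singleton_sub_eq]
  have hMpsd : M.PosSemidef := by
    apply hM.posSemidef_iff_eigenvalues_nonneg.mpr
    intro i; show (0:ℝ) ≤ _
    have h1 := hM.eigenvalues_mem_spectrum_real i
    rw [hspec, Set.mem_sub] at h1
    obtain ⟨a, ha, b, hb, hab⟩ := h1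
    rw [Set.mem_singleton_iff] at ha
    have hbμ := hmax b hb
    rw [← hab, ha]
    linarith
  have h0 := hMpsd.dotProduct_mulVec_nonneg xvec
  rw [star_trivial, hMdef, Matrix.sub_mulVec, dotProduct_sub, mulvec_eq] at h0
  have h1 : xvec ⬝ᵥ ((algebraMap ℝ (Matrix (Fin 12) (Fin 12) ℝ) μ) *ᵥ xvec) = μ * 174 := by
    rw [Algebra.algebraMap_eq_smul_one, Matrix.smul_mulVec, Matrix.one_mulVec,
      dotProduct_smul]
    have : xvec ⬝ᵥ xvec = 174 := by
      simp [xvec, dotProduct, Fin.sum_univ_succ]; norm_num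
    rw [this]; rfl
  have h2 : xvec ⬝ᵥ ![(15:ℝ),37,-37,-37,-15,15,15,37,-15,-15,-37,37] = 1290 := by
    simp [xvec, dotProduct, Fin.sum_univ_succ]; norm_num
  rw [h1, h2] at h0
  linarith


lemma hdm0 : d 0 = 3 ∧ m 0 = 10/3 := by
  constructor
  · rw [d, hd0]; norm_num
  · rw [m, d, hN0, Finset.sum_insert (by decide), Finset.sum_insert (by decide), Finset.sum_singleton, hd0, hd3, hd4, hd8]; norm_num
lemma hdm1 : d 1 = 4 ∧ m 1 = 15/4 := by
  constructor
  · rw [d, hd1]; norm_num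
  · rw [m, d, hN1, Finset.sum_insert (by decide), Finset.sum_insert (by decide), Finset.sum_insert (by decide), Finset.sum_singleton, hd1, hd2, hd3, hd8, hd10]; norm_num
lemma hdm2 : d 2 = 4 ∧ m 2 = 15/4 := by
  constructor
  · rw [d, hd2]; norm_num
  · rw [m, d, hN2, Finset.sum_insert (by decide), Finset.sum_insert (by decide), Finset.sum_insert (by decide), Finset.sum_singleton, hd1, hd2, hd5, hd7, hd11]; norm_num
lemma hdm3 : d 3 = 4 ∧ m 3 = 15/4 := by
  constructor
  · rw [d, hd3]; norm_num
  · rw [m, d, hN3, Finset.sum_insert (by decide), Finset.sum_insert (by decide), Finset.sum_insert (by decide), Finset.sum_singleton, hd0, hd1, hd3, hd7, hd11]; norm_num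
lemma hdm4 : d 4 = 3 ∧ m 4 = 10/3 := by
  constructor
  · rw [d, hd4]; norm_num
  · rw [m, d, hN4, Finset.sum_insert (by decide), Finset.sum_insert (by decide), Finset.sum_singleton, hd0, hd4, hd6, hd7]; norm_num
lemma hdm5 : d 5 = 3 ∧ m 5 = 10/3 := by
  constructor
  · rw [d, hd5]; norm_num
  · rw [m, d, hN5, Finset.sum_insert (by decide), Finset.sum_insert (by decide), Finset.sum_singleton, hd2, hd5, hd8, hd9]; norm_num
lemma hdm6 : d 6 = 3 ∧ m 6 = 10/3 := by
  constructor
  · rw [d, hd6]; norm_num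
  · rw [m, d, hN6, Finset.sum_insert (by decide), Finset.sum_insert (by decide), Finset.sum_singleton, hd4, hd6, hd9, hd10]; norm_num
lemma hdm7 : d 7 = 4 ∧ m 7 = 15/4 := by
  constructor
  · rw [d, hd7]; norm_num
  · rw [m, d, hN7, Finset.sum_insert (by decide), Finset.sum_insert (by decide), Finset.sum_insert (by decide), Finset.sum_singleton, hd2, hd3, hd4, hd7, hd10]; norm_num
lemma hdm8 : d 8 = 3 ∧ m 8 = 10/3 := by
  constructor
  · rw [d, hd8]; norm_num
  · rw [m, d, hN8, Finset.sum_insert (by decide), Finset.sum_insert (by decide), Finset.sum_singleton, hd0, hd1, hd5, hd8]; norm_num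
lemma hdm9 : d 9 = 3 ∧ m 9 = 10/3 := by
  constructor
  · rw [d, hd9]; norm_num
  · rw [m, d, hN9, Finset.sum_insert (by decide), Finset.sum_insert (by decide), Finset.sum_singleton, hd5, hd6, hd9, hd11]; norm_num
lemma hdm10 : d 10 = 4 ∧ m 10 = 15/4 := by
  constructor
  · rw [d, hd10]; norm_num
  · rw [m, d, hN10, Finset.sum_insert (by decide), Finset.sum_insert (by decide), Finset.sum_insert (by decide), Finset.sum_singleton, hd1, hd6, hd7, hd10, hd11]; norm_num
lemma hdm11 : d 11 = 4 ∧ m 11 = 15/4 := by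
  constructor
  · rw [d, hd11]; norm_num
  · rw [m, d, hN11, Finset.sum_insert (by decide), Finset.sum_insert (by decide), Finset.sum_insert (by decide), Finset.sum_singleton, hd2, hd3, hd9, hd10, hd11]; norm_num

lemma hdm : ∀ v : Fin 12, (d v = 3 ∧ m v = 10/3) ∨ (d v = 4 ∧ m v = 15/4) := by
  intro v
  fin_cases v
  · exact Or.inl hdm0
  · exact Or.inr hdm1
  · exact Or.inr hdm2
  · exact Or.inr hdm3
  · exact Or.inl hdm4
  · exact Or.inl hdm5
  · exact Or.inl hdm6
  · exact Or.inr hdm7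
  · exact Or.inl hdm8
  · exact Or.inl hdm9
  · exact Or.inr hdm10
  · exact Or.inr hdm11

lemma sqrt_bound : ∀ E : ℝ, E ≤ 211/8 → 2 + Real.sqrt E < 215/29 := by
  intro E hE
  have h1 : Real.sqrt E ≤ Real.sqrt (211/8) := Real.sqrt_le_sqrt hE
  have h2 : Real.sqrt (211/8) < 157/29 := by
    rw [show (157:ℝ)/29 = Real.sqrt ((157/29)^2) from (Real.sqrt_sq (by norm_num)).symm]
    exact Real.sqrt_lt_sqrt (by norm_num) (by norm_num)
  linarith


theorem laplacian_spectral_radius_exceeds_bound (μ : ℝ)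
    (hmem : μ ∈ spectrum ℝ (G.lapMatrix ℝ))
    (hmax : ∀ ν ∈ spectrum ℝ (G.lapMatrix ℝ), ν ≤ μ) :
    (Finset.univ.filter fun p : _ × _ => G.Adj p.1 p.2).sup' (by decide)
      (fun p => 2 + Real.sqrt (3 * (m p.1 ^ 2 + m p.2 ^ 2) - (d p.1 ^ 2 + d p.2 ^ 2) - 4 * (m p.1 + m p.2) + 4)) < μ := by
  have hmu := mu_lb μ hmax
  rw [Finset.sup'_lt_iff]
  intro p _
  refine lt_of_lt_of_le ?_ hmu
  rcases hdm p.1 with ⟨h1, h2⟩ | ⟨h1, h2⟩ <;> rcases hdm p.2 with ⟨h3, h4⟩ | ⟨h3, h4⟩ <;>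
    rw [h1, h2, h3, h4] <;> exact sqrt_bound _ (by norm_num)
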